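/- For every a > 0 there exists a constant C > 0 such that for all b > 0 and all x with 0 < x ≤ a/2: R_b(x) ≤ C·x⁴/b². (Uniform-in-b fourth-order bound on the error term R_b.) -/
import Mathlib

open Real

/-- The error term in the gaussian approximation of the boundary curve. -/
noncomputable def Rb (a b x : ℝ) : ℝ :=
  1 - cos (π * x / (2 * a)) ^ ((a / b) ^ 2) * exp (π ^ 2 * x ^ 2 / (8 * b ^ 2))

theorem Rb_fourth_order_bound (a : ℝ) (ha : 0 < a) :
    ∃ C > (0 : ℝ), ∀ b > (0 : ℝ), ∀ x : ℝ, 0 < x → x ≤ a / 2 →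
      Rb a b x ≤ C * x ^ 4 / b ^ 2 := by
  refine ⟨π ^ 4 / (16 * a ^ 2), by positivity, ?_⟩
  intro b hb x hx hxa
  set u := π * x / (2 * a) with hu
  have hu0 : 0 < u := by positivity
  have huπ : u ≤ π / 4 := by
    rw [hu, div_le_div_iff₀ (by positivity) (by norm_num)]
    nlinarith [pi_pos]
  have hc : Real.sqrt 2 / 2 ≤ cos u := by
    rw [← Real.cos_pi_div_four]
    exact Real.cos_le_cos_of_nonneg_of_le_pi hu0.le (by linarith [pi_pos]) huπ
  have hs2 : (1:ℝ) < Real.sqrt 2 := by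
    nlinarith [Real.sq_sqrt (by norm_num : (2:ℝ) ≥ 0), Real.sqrt_nonneg 2]
  have hc2 : (1:ℝ)/2 < cos u := by linarith
  have hc0 : 0 < cos u := by linarith
  have hcb : 1 - cos u ≤ u ^ 2 / 2 := by
    nlinarith [Real.one_sub_sq_div_two_lt_cos (ne_of_gt hu0)]
  have hc1 : cos u ≤ 1 := Real.cos_le_one u
  have hlog : -Real.log (cos u) ≤ u ^ 2 / 2 + u ^ 4 := by
    have h1 : Real.log (cos u)⁻¹ ≤ (cos u)⁻¹ - 1 :=
      Real.log_le_sub_one_of_pos (inv_pos.2 hc0)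
    rw [Real.log_inv] at h1
    have h2 : (cos u)⁻¹ - 1 = (1 - cos u) / cos u := by field_simp
    rw [h2] at h1
    have h3 : (1 - cos u) / cos u ≤ u ^ 2 / 2 + u ^ 4 := by
      rw [div_le_iff₀ hc0]
      nlinarith [mul_le_mul_of_nonneg_left hcb (sq_nonneg u), sq_nonneg u]
    linarith
  have hkey : cos u ^ ((a / b) ^ 2 : ℝ) * exp (π ^ 2 * x ^ 2 / (8 * b ^ 2))
      = exp ((a / b) ^ 2 * (Real.log (cos u) + u ^ 2 / 2)) := by
    rw [Real.rpow_def_of_pos hc0, ← Real.exp_add]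
    congr 1
    rw [hu]
    field_simp
    ring
  have hexp : 1 - exp ((a / b) ^ 2 * (Real.log (cos u) + u ^ 2 / 2))
      ≤ -((a / b) ^ 2 * (Real.log (cos u) + u ^ 2 / 2)) := by
    linarith [Real.add_one_le_exp ((a / b) ^ 2 * (Real.log (cos u) + u ^ 2 / 2))]
  have hfin : -((a / b) ^ 2 * (Real.log (cos u) + u ^ 2 / 2))
      ≤ π ^ 4 / (16 * a ^ 2) * x ^ 4 / b ^ 2 := by
    have hs : (0:ℝ) ≤ (a / b) ^ 2 := sq_nonneg _
    have h4 : -((a / b) ^ 2 * (Real.log (cos u) + u ^ 2 / 2))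
        = (a / b) ^ 2 * (-Real.log (cos u) - u ^ 2 / 2) := by ring
    rw [h4]
    have h5 : (a / b) ^ 2 * (-Real.log (cos u) - u ^ 2 / 2) ≤ (a / b) ^ 2 * u ^ 4 :=
      mul_le_mul_of_nonneg_left (by linarith) hs
    refine h5.trans (le_of_eq ?_)
    rw [hu]
    field_simp
    ring
  rw [Rb, hkey]
  linarith
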